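/- arXiv:1908.01705 — 5 statements merged into one kernel-verified Lean document; each statement's English description precedes it below -/
import Mathlib

section
/- For every choice of starting vertex i ∈ {0,1,2}, placing guards at every third vertex of the nonagon P, i.e., at the three vertices v_i, v_{i+3}, v_{i+6}, fails to cover P: there exists a point q ∈ P such that none of the closed segments [v_i, q], [v_{i+3}, q], [v_{i+6}, q] is contained in P. In particular, the nonagon P is not guarded by every third vertex. -/
open Set

/-- The vertices of the nonagon, in cyclic order. -/
noncomputable def v : Fin 9 → ℝ × ℝ :=
  ![(0, 0), (1, 5), (0, 8), (2, 4), (6, 11), (4, 7), (15, -1), (9, 3), (6, 4)]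

/-- The nonagon, realized as the union of the seven triangles of a triangulation. -/
noncomputable def P : Set (ℝ × ℝ) :=
  convexHull ℝ {v 3, v 4, v 5} ∪ convexHull ℝ {v 3, v 5, v 8} ∪
  convexHull ℝ {v 5, v 6, v 7} ∪ convexHull ℝ {v 5, v 7, v 8} ∪
  convexHull ℝ {v 3, v 8, v 0} ∪ convexHull ℝ {v 3, v 0, v 1} ∪
  convexHull ℝ {v 3, v 1, v 2}

private lemma halfspace_convex (a b r : ℝ) : Convex ℝ {x : ℝ × ℝ | a * x.1 + b * x.2 ≤ r} := by
  intro x hx y hy s t hs ht hst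
  simp only [mem_setOf_eq, Prod.fst_add, Prod.snd_add, Prod.smul_fst, Prod.smul_snd,
    smul_eq_mul] at *
  calc a * (s * x.1 + t * y.1) + b * (s * x.2 + t * y.2)
      = s * (a * x.1 + b * x.2) + t * (a * y.1 + b * y.2) := by ring
    _ ≤ s * r + t * r := add_le_add (mul_le_mul_of_nonneg_left hx hs)
        (mul_le_mul_of_nonneg_left hy ht)
    _ = r := by rw [← add_mul, hst, one_mul]

private lemma not_mem_tri {A B C p : ℝ × ℝ} (a b r : ℝ)
    (h1 : a * A.1 + b * A.2 ≤ r) (h2 : a * B.1 + b * B.2 ≤ r) (h3 : a * C.1 + b * C.2 ≤ r)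
    (hp : r < a * p.1 + b * p.2) : p ∉ convexHull ℝ {A, B, C} := fun h => by
  have hsub : convexHull ℝ {A, B, C} ⊆ {x : ℝ × ℝ | a * x.1 + b * x.2 ≤ r} :=
    convexHull_min (by
      intro x hx
      simp only [Set.mem_insert_iff, Set.mem_singleton_iff] at hx
      rcases hx with rfl | rfl | rfl <;> assumption) (halfspace_convex a b r)
  have := hsub h
  simp only [mem_setOf_eq] at this
  linarith

private lemma mem_tri {A B C : ℝ × ℝ} (q : ℝ × ℝ) (t s : ℝ) (ht0 : 0 ≤ t) (ht1 : t ≤ 1)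
    (hs0 : 0 ≤ s) (hs1 : s ≤ 1) (hq : q = (1 - t) • A + t • ((1 - s) • B + s • C)) :
    q ∈ convexHull ℝ {A, B, C} := by
  have hA : A ∈ convexHull ℝ ({A, B, C} : Set (ℝ × ℝ)) := subset_convexHull ℝ _ (by simp)
  have hB : B ∈ convexHull ℝ ({A, B, C} : Set (ℝ × ℝ)) := subset_convexHull ℝ _ (by simp)
  have hC : C ∈ convexHull ℝ ({A, B, C} : Set (ℝ × ℝ)) := subset_convexHull ℝ _ (by simp)
  have hm : (1 - s) • B + s • C ∈ convexHull ℝ ({A, B, C} : Set (ℝ × ℝ)) :=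
    (convex_convexHull ℝ _) hB hC (by linarith) hs0 (by ring)
  subst hq
  exact (convex_convexHull ℝ _) hA hm (by linarith) ht0 (by ring)

private lemma P_eq : P =
    convexHull ℝ {((2:ℝ), (4:ℝ)), ((6:ℝ), (11:ℝ)), ((4:ℝ), (7:ℝ))} ∪
    convexHull ℝ {((2:ℝ), (4:ℝ)), ((4:ℝ), (7:ℝ)), ((6:ℝ), (4:ℝ))} ∪
    convexHull ℝ {((4:ℝ), (7:ℝ)), ((15:ℝ), ((-1:ℝ))), ((9:ℝ), (3:ℝ))} ∪
    convexHull ℝ {((4:ℝ), (7:ℝ)), ((9:ℝ), (3:ℝ)), ((6:ℝ), (4:ℝ))} ∪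
    convexHull ℝ {((2:ℝ), (4:ℝ)), ((6:ℝ), (4:ℝ)), ((0:ℝ), (0:ℝ))} ∪
    convexHull ℝ {((2:ℝ), (4:ℝ)), ((0:ℝ), (0:ℝ)), ((1:ℝ), (5:ℝ))} ∪
    convexHull ℝ {((2:ℝ), (4:ℝ)), ((1:ℝ), (5:ℝ)), ((0:ℝ), (8:ℝ))} := rfl


/-- For every starting vertex `i ∈ {0,1,2}`, placing guards at the three vertices
`v i`, `v (i+3)`, `v (i+6)` fails to cover the nonagon `P`: some point `q ∈ P` is
visible from none of the three guards. In particular, `P` is not guarded by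
every third vertex. -/
theorem nonagon_not_guarded_by_every_third_vertex :
    ∀ i : Fin 9, (i : ℕ) < 3 →
      ∃ q ∈ P, ¬ segment ℝ (v i) q ⊆ P ∧ ¬ segment ℝ (v (i + 3)) q ⊆ P ∧
        ¬ segment ℝ (v (i + 6)) q ⊆ P := by
  intro i hi
  fin_cases i <;> simp only [] at hi ⊢

  · -- i = 0
    refine ⟨((63/10:ℝ), (39/10:ℝ)), ?_, ?_, ?_, ?_⟩
    · show _ ∈ P
      rw [P_eq]
      exact Set.mem_union_left _ (Set.mem_union_left _ (Set.mem_union_left _ (Set.mem_union_right _ (mem_tri ((63/10:ℝ), (39/10:ℝ)) (1:ℝ) (9/10:ℝ) (by norm_num) (by norm_num) (by norm_num) (by norm_num) (by norm_num [Prod.smul_mk, Prod.mk_add_mk, Prod.ext_iff, smul_eq_mul])))))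
    · intro hsub
      have hx : ((63/2000:ℝ), (39/2000:ℝ)) ∉ P := by
        rw [P_eq]; simp only [mem_union, not_or]
        refine ⟨⟨⟨⟨⟨⟨?_, ?_⟩, ?_⟩, ?_⟩, ?_⟩, ?_⟩, ?_⟩
        · exact not_mem_tri (3:ℝ) ((-2:ℝ)) ((-2:ℝ)) (by norm_num) (by norm_num) (by norm_num) (by norm_num)
        · exact not_mem_tri (0:ℝ) ((-4:ℝ)) ((-16:ℝ)) (by norm_num) (by norm_num) (by norm_num) (by norm_num)
        · exact not_mem_tri ((-4:ℝ)) ((-6:ℝ)) ((-54:ℝ)) (by norm_num) (by norm_num) (by norm_num) (by norm_num)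
        · exact not_mem_tri ((-1:ℝ)) ((-3:ℝ)) ((-18:ℝ)) (by norm_num) (by norm_num) (by norm_num) (by norm_num)
        · exact not_mem_tri (4:ℝ) ((-6:ℝ)) (0:ℝ) (by norm_num) (by norm_num) (by norm_num) (by norm_num)
        · exact not_mem_tri (4:ℝ) ((-2:ℝ)) (0:ℝ) (by norm_num) (by norm_num) (by norm_num) (by norm_num)
        · exact not_mem_tri ((-1:ℝ)) ((-1:ℝ)) ((-6:ℝ)) (by norm_num) (by norm_num) (by norm_num) (by norm_num)
      have hmem : ((63/2000:ℝ), (39/2000:ℝ)) ∈ segment ℝ (((0:ℝ), (0:ℝ)) : ℝ × ℝ) ((63/10:ℝ), (39/10:ℝ)) :=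
        ⟨(199/200:ℝ), (1/200:ℝ), by norm_num, by norm_num, by norm_num, by norm_num [Prod.smul_mk, Prod.mk_add_mk, Prod.ext_iff, smul_eq_mul]⟩
      exact hx (hsub hmem)
    · intro hsub
      have hx : ((587/100:ℝ), (391/100:ℝ)) ∉ P := by
        rw [P_eq]; simp only [mem_union, not_or]
        refine ⟨⟨⟨⟨⟨⟨?_, ?_⟩, ?_⟩, ?_⟩, ?_⟩, ?_⟩, ?_⟩
        · exact not_mem_tri (4:ℝ) ((-2:ℝ)) (2:ℝ) (by norm_num) (by norm_num) (by norm_num) (by norm_num)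
        · exact not_mem_tri (0:ℝ) ((-4:ℝ)) ((-16:ℝ)) (by norm_num) (by norm_num) (by norm_num) (by norm_num)
        · exact not_mem_tri ((-4:ℝ)) ((-6:ℝ)) ((-54:ℝ)) (by norm_num) (by norm_num) (by norm_num) (by norm_num)
        · exact not_mem_tri ((-1:ℝ)) ((-3:ℝ)) ((-18:ℝ)) (by norm_num) (by norm_num) (by norm_num) (by norm_num)
        · exact not_mem_tri (4:ℝ) ((-6:ℝ)) (0:ℝ) (by norm_num) (by norm_num) (by norm_num) (by norm_num)
        · exact not_mem_tri (4:ℝ) ((-2:ℝ)) (0:ℝ) (by norm_num) (by norm_num) (by norm_num) (by norm_num)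
        · exact not_mem_tri (4:ℝ) (2:ℝ) (16:ℝ) (by norm_num) (by norm_num) (by norm_num) (by norm_num)
      have hmem : ((587/100:ℝ), (391/100:ℝ)) ∈ segment ℝ (((2:ℝ), (4:ℝ)) : ℝ × ℝ) ((63/10:ℝ), (39/10:ℝ)) :=
        ⟨(1/10:ℝ), (9/10:ℝ), by norm_num, by norm_num, by norm_num, by norm_num [Prod.smul_mk, Prod.mk_add_mk, Prod.ext_iff, smul_eq_mul]⟩
      exact hx (hsub hmem)
    · intro hsub
      have hx : ((29913/2000:ℝ), (-1951/2000:ℝ)) ∉ P := by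
        rw [P_eq]; simp only [mem_union, not_or]
        refine ⟨⟨⟨⟨⟨⟨?_, ?_⟩, ?_⟩, ?_⟩, ?_⟩, ?_⟩, ?_⟩
        · exact not_mem_tri (4:ℝ) ((-2:ℝ)) (2:ℝ) (by norm_num) (by norm_num) (by norm_num) (by norm_num)
        · exact not_mem_tri (3:ℝ) (2:ℝ) (26:ℝ) (by norm_num) (by norm_num) (by norm_num) (by norm_num)
        · exact not_mem_tri ((-4:ℝ)) ((-6:ℝ)) ((-54:ℝ)) (by norm_num) (by norm_num) (by norm_num) (by norm_num)
        · exact not_mem_tri (4:ℝ) (5:ℝ) (51:ℝ) (by norm_num) (by norm_num) (by norm_num) (by norm_num)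
        · exact not_mem_tri (4:ℝ) ((-6:ℝ)) (0:ℝ) (by norm_num) (by norm_num) (by norm_num) (by norm_num)
        · exact not_mem_tri (4:ℝ) ((-2:ℝ)) (0:ℝ) (by norm_num) (by norm_num) (by norm_num) (by norm_num)
        · exact not_mem_tri (4:ℝ) (2:ℝ) (16:ℝ) (by norm_num) (by norm_num) (by norm_num) (by norm_num)
      have hmem : ((29913/2000:ℝ), (-1951/2000:ℝ)) ∈ segment ℝ (((15:ℝ), ((-1:ℝ))) : ℝ × ℝ) ((63/10:ℝ), (39/10:ℝ)) :=
        ⟨(199/200:ℝ), (1/200:ℝ), by norm_num, by norm_num, by norm_num, by norm_num [Prod.smul_mk, Prod.mk_add_mk, Prod.ext_iff, smul_eq_mul]⟩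
      exact hx (hsub hmem)

  · -- i = 1
    refine ⟨((12/5:ℝ), (37/10:ℝ)), ?_, ?_, ?_, ?_⟩
    · show _ ∈ P
      rw [P_eq]
      exact Set.mem_union_left _ (Set.mem_union_left _ (Set.mem_union_right _ (mem_tri ((12/5:ℝ), (37/10:ℝ)) (17/80:ℝ) (6/17:ℝ) (by norm_num) (by norm_num) (by norm_num) (by norm_num) (by norm_num [Prod.smul_mk, Prod.mk_add_mk, Prod.ext_iff, smul_eq_mul]))))
    · intro hsub
      have hx : ((969/500:ℝ), (4129/1000:ℝ)) ∉ P := by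
        rw [P_eq]; simp only [mem_union, not_or]
        refine ⟨⟨⟨⟨⟨⟨?_, ?_⟩, ?_⟩, ?_⟩, ?_⟩, ?_⟩, ?_⟩
        · exact not_mem_tri ((-7:ℝ)) (4:ℝ) (2:ℝ) (by norm_num) (by norm_num) (by norm_num) (by norm_num)
        · exact not_mem_tri ((-3:ℝ)) (2:ℝ) (2:ℝ) (by norm_num) (by norm_num) (by norm_num) (by norm_num)
        · exact not_mem_tri ((-4:ℝ)) ((-6:ℝ)) ((-54:ℝ)) (by norm_num) (by norm_num) (by norm_num) (by norm_num)
        · exact not_mem_tri ((-1:ℝ)) ((-3:ℝ)) ((-18:ℝ)) (by norm_num) (by norm_num) (by norm_num) (by norm_num)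
        · exact not_mem_tri (0:ℝ) (4:ℝ) (16:ℝ) (by norm_num) (by norm_num) (by norm_num) (by norm_num)
        · exact not_mem_tri (1:ℝ) (1:ℝ) (6:ℝ) (by norm_num) (by norm_num) (by norm_num) (by norm_num)
        · exact not_mem_tri (4:ℝ) (2:ℝ) (16:ℝ) (by norm_num) (by norm_num) (by norm_num) (by norm_num)
      have hmem : ((969/500:ℝ), (4129/1000:ℝ)) ∈ segment ℝ (((1:ℝ), (5:ℝ)) : ℝ × ℝ) ((12/5:ℝ), (37/10:ℝ)) :=
        ⟨(33/100:ℝ), (67/100:ℝ), by norm_num, by norm_num, by norm_num, by norm_num [Prod.smul_mk, Prod.mk_add_mk, Prod.ext_iff, smul_eq_mul]⟩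
      exact hx (hsub hmem)
    · intro hsub
      have hx : ((2991/500:ℝ), (21927/2000:ℝ)) ∉ P := by
        rw [P_eq]; simp only [mem_union, not_or]
        refine ⟨⟨⟨⟨⟨⟨?_, ?_⟩, ?_⟩, ?_⟩, ?_⟩, ?_⟩, ?_⟩
        · exact not_mem_tri (4:ℝ) ((-2:ℝ)) (2:ℝ) (by norm_num) (by norm_num) (by norm_num) (by norm_num)
        · exact not_mem_tri ((-3:ℝ)) (2:ℝ) (2:ℝ) (by norm_num) (by norm_num) (by norm_num) (by norm_num)
        · exact not_mem_tri (8:ℝ) (11:ℝ) (109:ℝ) (by norm_num) (by norm_num) (by norm_num) (by norm_num)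
        · exact not_mem_tri (4:ℝ) (5:ℝ) (51:ℝ) (by norm_num) (by norm_num) (by norm_num) (by norm_num)
        · exact not_mem_tri (0:ℝ) (4:ℝ) (16:ℝ) (by norm_num) (by norm_num) (by norm_num) (by norm_num)
        · exact not_mem_tri (4:ℝ) ((-2:ℝ)) (0:ℝ) (by norm_num) (by norm_num) (by norm_num) (by norm_num)
        · exact not_mem_tri (4:ℝ) (2:ℝ) (16:ℝ) (by norm_num) (by norm_num) (by norm_num) (by norm_num)
      have hmem : ((2991/500:ℝ), (21927/2000:ℝ)) ∈ segment ℝ (((6:ℝ), (11:ℝ)) : ℝ × ℝ) ((12/5:ℝ), (37/10:ℝ)) :=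
        ⟨(199/200:ℝ), (1/200:ℝ), by norm_num, by norm_num, by norm_num, by norm_num [Prod.smul_mk, Prod.mk_add_mk, Prod.ext_iff, smul_eq_mul]⟩
      exact hx (hsub hmem)
    · intro hsub
      have hx : ((8967/1000:ℝ), (6007/2000:ℝ)) ∉ P := by
        rw [P_eq]; simp only [mem_union, not_or]
        refine ⟨⟨⟨⟨⟨⟨?_, ?_⟩, ?_⟩, ?_⟩, ?_⟩, ?_⟩, ?_⟩
        · exact not_mem_tri (4:ℝ) ((-2:ℝ)) (2:ℝ) (by norm_num) (by norm_num) (by norm_num) (by norm_num)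
        · exact not_mem_tri (3:ℝ) (2:ℝ) (26:ℝ) (by norm_num) (by norm_num) (by norm_num) (by norm_num)
        · exact not_mem_tri ((-4:ℝ)) ((-6:ℝ)) ((-54:ℝ)) (by norm_num) (by norm_num) (by norm_num) (by norm_num)
        · exact not_mem_tri ((-1:ℝ)) ((-3:ℝ)) ((-18:ℝ)) (by norm_num) (by norm_num) (by norm_num) (by norm_num)
        · exact not_mem_tri (4:ℝ) ((-6:ℝ)) (0:ℝ) (by norm_num) (by norm_num) (by norm_num) (by norm_num)
        · exact not_mem_tri (4:ℝ) ((-2:ℝ)) (0:ℝ) (by norm_num) (by norm_num) (by norm_num) (by norm_num)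
        · exact not_mem_tri (4:ℝ) (2:ℝ) (16:ℝ) (by norm_num) (by norm_num) (by norm_num) (by norm_num)
      have hmem : ((8967/1000:ℝ), (6007/2000:ℝ)) ∈ segment ℝ (((9:ℝ), (3:ℝ)) : ℝ × ℝ) ((12/5:ℝ), (37/10:ℝ)) :=
        ⟨(199/200:ℝ), (1/200:ℝ), by norm_num, by norm_num, by norm_num, by norm_num [Prod.smul_mk, Prod.mk_add_mk, Prod.ext_iff, smul_eq_mul]⟩
      exact hx (hsub hmem)

  · -- i = 2
    refine ⟨((9/10:ℝ), (41/10:ℝ)), ?_, ?_, ?_, ?_⟩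
    · show _ ∈ P
      rw [P_eq]
      exact Set.mem_union_left _ (Set.mem_union_right _ (mem_tri ((9/10:ℝ), (41/10:ℝ)) (14/15:ℝ) (23/28:ℝ) (by norm_num) (by norm_num) (by norm_num) (by norm_num) (by norm_num [Prod.smul_mk, Prod.mk_add_mk, Prod.ext_iff, smul_eq_mul])))
    · intro hsub
      have hx : ((9/2000:ℝ), (15961/2000:ℝ)) ∉ P := by
        rw [P_eq]; simp only [mem_union, not_or]
        refine ⟨⟨⟨⟨⟨⟨?_, ?_⟩, ?_⟩, ?_⟩, ?_⟩, ?_⟩, ?_⟩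
        · exact not_mem_tri ((-7:ℝ)) (4:ℝ) (2:ℝ) (by norm_num) (by norm_num) (by norm_num) (by norm_num)
        · exact not_mem_tri ((-3:ℝ)) (2:ℝ) (2:ℝ) (by norm_num) (by norm_num) (by norm_num) (by norm_num)
        · exact not_mem_tri ((-4:ℝ)) ((-6:ℝ)) ((-54:ℝ)) (by norm_num) (by norm_num) (by norm_num) (by norm_num)
        · exact not_mem_tri ((-3:ℝ)) ((-2:ℝ)) ((-26:ℝ)) (by norm_num) (by norm_num) (by norm_num) (by norm_num)
        · exact not_mem_tri (0:ℝ) (4:ℝ) (16:ℝ) (by norm_num) (by norm_num) (by norm_num) (by norm_num)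
        · exact not_mem_tri ((-5:ℝ)) (1:ℝ) (0:ℝ) (by norm_num) (by norm_num) (by norm_num) (by norm_num)
        · exact not_mem_tri ((-3:ℝ)) ((-1:ℝ)) ((-8:ℝ)) (by norm_num) (by norm_num) (by norm_num) (by norm_num)
      have hmem : ((9/2000:ℝ), (15961/2000:ℝ)) ∈ segment ℝ (((0:ℝ), (8:ℝ)) : ℝ × ℝ) ((9/10:ℝ), (41/10:ℝ)) :=
        ⟨(199/200:ℝ), (1/200:ℝ), by norm_num, by norm_num, by norm_num, by norm_num [Prod.smul_mk, Prod.mk_add_mk, Prod.ext_iff, smul_eq_mul]⟩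
      exact hx (hsub hmem)
    · intro hsub
      have hx : ((169/50:ℝ), (321/50:ℝ)) ∉ P := by
        rw [P_eq]; simp only [mem_union, not_or]
        refine ⟨⟨⟨⟨⟨⟨?_, ?_⟩, ?_⟩, ?_⟩, ?_⟩, ?_⟩, ?_⟩
        · exact not_mem_tri ((-7:ℝ)) (4:ℝ) (2:ℝ) (by norm_num) (by norm_num) (by norm_num) (by norm_num)
        · exact not_mem_tri ((-3:ℝ)) (2:ℝ) (2:ℝ) (by norm_num) (by norm_num) (by norm_num) (by norm_num)
        · exact not_mem_tri ((-4:ℝ)) ((-6:ℝ)) ((-54:ℝ)) (by norm_num) (by norm_num) (by norm_num) (by norm_num)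
        · exact not_mem_tri ((-3:ℝ)) ((-2:ℝ)) ((-26:ℝ)) (by norm_num) (by norm_num) (by norm_num) (by norm_num)
        · exact not_mem_tri (0:ℝ) (4:ℝ) (16:ℝ) (by norm_num) (by norm_num) (by norm_num) (by norm_num)
        · exact not_mem_tri (4:ℝ) ((-2:ℝ)) (0:ℝ) (by norm_num) (by norm_num) (by norm_num) (by norm_num)
        · exact not_mem_tri (4:ℝ) (2:ℝ) (16:ℝ) (by norm_num) (by norm_num) (by norm_num) (by norm_num)
      have hmem : ((169/50:ℝ), (321/50:ℝ)) ∈ segment ℝ (((4:ℝ), (7:ℝ)) : ℝ × ℝ) ((9/10:ℝ), (41/10:ℝ)) :=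
        ⟨(4/5:ℝ), (1/5:ℝ), by norm_num, by norm_num, by norm_num, by norm_num [Prod.smul_mk, Prod.mk_add_mk, Prod.ext_iff, smul_eq_mul]⟩
      exact hx (hsub hmem)
    · intro hsub
      have hx : ((1011/500:ℝ), (2039/500:ℝ)) ∉ P := by
        rw [P_eq]; simp only [mem_union, not_or]
        refine ⟨⟨⟨⟨⟨⟨?_, ?_⟩, ?_⟩, ?_⟩, ?_⟩, ?_⟩, ?_⟩
        · exact not_mem_tri ((-7:ℝ)) (4:ℝ) (2:ℝ) (by norm_num) (by norm_num) (by norm_num) (by norm_num)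
        · exact not_mem_tri ((-3:ℝ)) (2:ℝ) (2:ℝ) (by norm_num) (by norm_num) (by norm_num) (by norm_num)
        · exact not_mem_tri ((-4:ℝ)) ((-6:ℝ)) ((-54:ℝ)) (by norm_num) (by norm_num) (by norm_num) (by norm_num)
        · exact not_mem_tri ((-1:ℝ)) ((-3:ℝ)) ((-18:ℝ)) (by norm_num) (by norm_num) (by norm_num) (by norm_num)
        · exact not_mem_tri (0:ℝ) (4:ℝ) (16:ℝ) (by norm_num) (by norm_num) (by norm_num) (by norm_num)
        · exact not_mem_tri (1:ℝ) (1:ℝ) (6:ℝ) (by norm_num) (by norm_num) (by norm_num) (by norm_num)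
        · exact not_mem_tri (4:ℝ) (2:ℝ) (16:ℝ) (by norm_num) (by norm_num) (by norm_num) (by norm_num)
      have hmem : ((1011/500:ℝ), (2039/500:ℝ)) ∈ segment ℝ (((6:ℝ), (4:ℝ)) : ℝ × ℝ) ((9/10:ℝ), (41/10:ℝ)) :=
        ⟨(11/50:ℝ), (39/50:ℝ), by norm_num, by norm_num, by norm_num, by norm_num [Prod.smul_mk, Prod.mk_add_mk, Prod.ext_iff, smul_eq_mul]⟩
      exact hx (hsub hmem)

  all_goals omega
end

section
/- Guards placed at the vertices v2, v5, v8 of the nonagon P do not cover P: there exists a point q ∈ P such that none of the closed segments [v2, q], [v5, q], [v8, q] is contained in P. -/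
open Set

/-- The blocking witness on the segment from `v 2`. -/
noncomputable def m2 : ℝ × ℝ := (1/2, 31/5)
/-- The blocking witness on the segment from `v 5`. -/
noncomputable def m5 : ℝ × ℝ := (5/2, 57/10)
/-- The blocking witness on the segment from `v 8`. -/
noncomputable def m8 : ℝ × ℝ := (2, 108/25)

/-- A point strictly beyond a closed half-plane containing three points is not in their
convex hull. -/
lemma not_mem_tri_s3 {a b c x : ℝ × ℝ} (c1 c2 r : ℝ)
    (ha : c1 * a.1 + c2 * a.2 ≤ r) (hb : c1 * b.1 + c2 * b.2 ≤ r)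
    (hc : c1 * c.1 + c2 * c.2 ≤ r) (hx : r < c1 * x.1 + c2 * x.2) :
    x ∉ convexHull ℝ ({a, b, c} : Set (ℝ × ℝ)) := by
  intro h
  have hlin : IsLinearMap ℝ (fun w : ℝ × ℝ => c1 * w.1 + c2 * w.2) :=
    ⟨fun p q => by simp only [Prod.fst_add, Prod.snd_add]; ring,
     fun t p => by simp only [Prod.smul_fst, Prod.smul_snd, smul_eq_mul]; ring⟩
  have hsub : convexHull ℝ ({a, b, c} : Set (ℝ × ℝ)) ⊆ {w | c1 * w.1 + c2 * w.2 ≤ r} :=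
    convexHull_min (by rintro y (rfl | rfl | rfl) <;> assumption) (convex_halfSpace_le hlin r)
  exact absurd (hsub h) (not_le.2 hx)

/-- Guards placed at the vertices `v 2`, `v 5`, `v 8` do not cover the nonagon `P`:
some point `q ∈ P` is visible from none of them. -/
theorem nonagon_not_covered_by_v2_v5_v8 :
    ∃ q ∈ P, ¬ segment ℝ (v 2) q ⊆ P ∧ ¬ segment ℝ (v 5) q ⊆ P ∧
      ¬ segment ℝ (v 8) q ⊆ P := by
  have e0 : v 0 = (0, 0) := rfl
  have e1 : v 1 = (1, 5) := rfl
  have e2 : v 2 = (0, 8) := rfl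
  have e3 : v 3 = (2, 4) := rfl
  have e4 : v 4 = (6, 11) := rfl
  have e5 : v 5 = (4, 7) := rfl
  have e6 : v 6 = (15, -1) := rfl
  have e7 : v 7 = (9, 3) := rfl
  have e8 : v 8 = (6, 4) := rfl
  refine ⟨(1, 22/5), ?_, ?_, ?_, ?_⟩
  · -- q ∈ P : it lies in the triangle {v 3, v 0, v 1}
    have h3 : v 3 ∈ convexHull ℝ ({v 3, v 0, v 1} : Set (ℝ × ℝ)) :=
      subset_convexHull ℝ _ (by simp)
    have h0 : v 0 ∈ convexHull ℝ ({v 3, v 0, v 1} : Set (ℝ × ℝ)) :=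
      subset_convexHull ℝ _ (by simp)
    have h1 : v 1 ∈ convexHull ℝ ({v 3, v 0, v 1} : Set (ℝ × ℝ)) :=
      subset_convexHull ℝ _ (by simp)
    have hw : ((8 : ℝ)/9, (40 : ℝ)/9) ∈ convexHull ℝ ({v 3, v 0, v 1} : Set (ℝ × ℝ)) := by
      have := (convex_convexHull ℝ ({v 3, v 0, v 1} : Set (ℝ × ℝ))).segment_subset h0 h1
      apply this
      refine ⟨1/9, 8/9, by norm_num, by norm_num, by norm_num, ?_⟩
      rw [e0, e1]
      norm_num [Prod.smul_mk, Prod.mk_add_mk, Prod.mk.injEq, smul_eq_mul]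
    have hq : ((1 : ℝ), (22 : ℝ)/5) ∈ convexHull ℝ ({v 3, v 0, v 1} : Set (ℝ × ℝ)) := by
      have := (convex_convexHull ℝ ({v 3, v 0, v 1} : Set (ℝ × ℝ))).segment_subset h3 hw
      apply this
      refine ⟨1/10, 9/10, by norm_num, by norm_num, by norm_num, ?_⟩
      rw [e3]
      norm_num [Prod.smul_mk, Prod.mk_add_mk, Prod.mk.injEq, smul_eq_mul]
    simp only [P, mem_union]
    exact Or.inl (Or.inr hq)
  · -- not visible from v 2 : m2 is on the segment but m2 ∉ P
    intro hsub
    have hmem : m2 ∈ segment ℝ (v 2) ((1 : ℝ), (22 : ℝ)/5) := by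
      refine ⟨1/2, 1/2, by norm_num, by norm_num, by norm_num, ?_⟩
      rw [e2, m2]
      norm_num [Prod.smul_mk, Prod.mk_add_mk, Prod.mk.injEq, smul_eq_mul]
    have hm2 : m2 ∉ P := by
      simp only [P, mem_union, not_or]
      refine ⟨⟨⟨⟨⟨⟨?_, ?_⟩, ?_⟩, ?_⟩, ?_⟩, ?_⟩, ?_⟩
      · exact not_mem_tri_s3 (-7 : ℝ) (4 : ℝ) (2 : ℝ) (by norm_num [e3]) (by norm_num [e4]) (by norm_num [e5]) (by norm_num [m2])
      · exact not_mem_tri_s3 (-3 : ℝ) (2 : ℝ) (2 : ℝ) (by norm_num [e3]) (by norm_num [e5]) (by norm_num [e8]) (by norm_num [m2])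
      · exact not_mem_tri_s3 (-4 : ℝ) (-6 : ℝ) (-54 : ℝ) (by norm_num [e5]) (by norm_num [e6]) (by norm_num [e7]) (by norm_num [m2])
      · exact not_mem_tri_s3 (-3 : ℝ) (-2 : ℝ) (-26 : ℝ) (by norm_num [e5]) (by norm_num [e7]) (by norm_num [e8]) (by norm_num [m2])
      · exact not_mem_tri_s3 (0 : ℝ) (4 : ℝ) (16 : ℝ) (by norm_num [e3]) (by norm_num [e8]) (by norm_num [e0]) (by norm_num [m2])
      · exact not_mem_tri_s3 (-5 : ℝ) (1 : ℝ) (0 : ℝ) (by norm_num [e3]) (by norm_num [e0]) (by norm_num [e1]) (by norm_num [m2])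
      · exact not_mem_tri_s3 (-3 : ℝ) (-1 : ℝ) (-8 : ℝ) (by norm_num [e3]) (by norm_num [e1]) (by norm_num [e2]) (by norm_num [m2])
    exact hm2 (hsub hmem)
  · -- not visible from v 5
    intro hsub
    have hmem : m5 ∈ segment ℝ (v 5) ((1 : ℝ), (22 : ℝ)/5) := by
      refine ⟨1/2, 1/2, by norm_num, by norm_num, by norm_num, ?_⟩
      rw [e5, m5]
      norm_num [Prod.smul_mk, Prod.mk_add_mk, Prod.mk.injEq, smul_eq_mul]
    have hm5 : m5 ∉ P := by
      simp only [P, mem_union, not_or]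
      refine ⟨⟨⟨⟨⟨⟨?_, ?_⟩, ?_⟩, ?_⟩, ?_⟩, ?_⟩, ?_⟩
      · exact not_mem_tri_s3 (-7 : ℝ) (4 : ℝ) (2 : ℝ) (by norm_num [e3]) (by norm_num [e4]) (by norm_num [e5]) (by norm_num [m5])
      · exact not_mem_tri_s3 (-3 : ℝ) (2 : ℝ) (2 : ℝ) (by norm_num [e3]) (by norm_num [e5]) (by norm_num [e8]) (by norm_num [m5])
      · exact not_mem_tri_s3 (-4 : ℝ) (-6 : ℝ) (-54 : ℝ) (by norm_num [e5]) (by norm_num [e6]) (by norm_num [e7]) (by norm_num [m5])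
      · exact not_mem_tri_s3 (-3 : ℝ) (-2 : ℝ) (-26 : ℝ) (by norm_num [e5]) (by norm_num [e7]) (by norm_num [e8]) (by norm_num [m5])
      · exact not_mem_tri_s3 (0 : ℝ) (4 : ℝ) (16 : ℝ) (by norm_num [e3]) (by norm_num [e8]) (by norm_num [e0]) (by norm_num [m5])
      · exact not_mem_tri_s3 (1 : ℝ) (1 : ℝ) (6 : ℝ) (by norm_num [e3]) (by norm_num [e0]) (by norm_num [e1]) (by norm_num [m5])
      · exact not_mem_tri_s3 (4 : ℝ) (2 : ℝ) (16 : ℝ) (by norm_num [e3]) (by norm_num [e1]) (by norm_num [e2]) (by norm_num [m5])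
    exact hm5 (hsub hmem)
  · -- not visible from v 8
    intro hsub
    have hmem : m8 ∈ segment ℝ (v 8) ((1 : ℝ), (22 : ℝ)/5) := by
      refine ⟨1/5, 4/5, by norm_num, by norm_num, by norm_num, ?_⟩
      rw [e8, m8]
      norm_num [Prod.smul_mk, Prod.mk_add_mk, Prod.mk.injEq, smul_eq_mul]
    have hm8 : m8 ∉ P := by
      simp only [P, mem_union, not_or]
      refine ⟨⟨⟨⟨⟨⟨?_, ?_⟩, ?_⟩, ?_⟩, ?_⟩, ?_⟩, ?_⟩
      · exact not_mem_tri_s3 (-7 : ℝ) (4 : ℝ) (2 : ℝ) (by norm_num [e3]) (by norm_num [e4]) (by norm_num [e5]) (by norm_num [m8])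
      · exact not_mem_tri_s3 (-3 : ℝ) (2 : ℝ) (2 : ℝ) (by norm_num [e3]) (by norm_num [e5]) (by norm_num [e8]) (by norm_num [m8])
      · exact not_mem_tri_s3 (-4 : ℝ) (-6 : ℝ) (-54 : ℝ) (by norm_num [e5]) (by norm_num [e6]) (by norm_num [e7]) (by norm_num [m8])
      · exact not_mem_tri_s3 (-1 : ℝ) (-3 : ℝ) (-18 : ℝ) (by norm_num [e5]) (by norm_num [e7]) (by norm_num [e8]) (by norm_num [m8])
      · exact not_mem_tri_s3 (0 : ℝ) (4 : ℝ) (16 : ℝ) (by norm_num [e3]) (by norm_num [e8]) (by norm_num [e0]) (by norm_num [m8])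
      · exact not_mem_tri_s3 (1 : ℝ) (1 : ℝ) (6 : ℝ) (by norm_num [e3]) (by norm_num [e0]) (by norm_num [e1]) (by norm_num [m8])
      · exact not_mem_tri_s3 (4 : ℝ) (2 : ℝ) (16 : ℝ) (by norm_num [e3]) (by norm_num [e1]) (by norm_num [e2]) (by norm_num [m8])
    exact hm8 (hsub hmem)
end

section
/- The topological frontier (boundary) of the nonagon P equals the union of the nine closed segments between cyclically consecutive vertices, that is, frontier P = [v0,v1] ∪ [v1,v2] ∪ [v2,v3] ∪ [v3,v4] ∪ [v4,v5] ∪ [v5,v6] ∪ [v6,v7] ∪ [v7,v8] ∪ [v8,v0]. In particular, P is a simple polygon with these nine vertices. -/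
open Set

/-!
`P` is closed, so its frontier is `P \ interior P`. A point of a triangle of the triangulation
lies in the interior of that triangle or on one of its sides; a side is either an edge of the
nonagon or one of the six diagonals, and every diagonal is shared by two triangles lying on
opposite sides of it, so its relative interior lies in `interior P`. Hence the frontier is contained
in the nine edges.

Conversely, let `x` lie in the relative interior of an edge. Each of the seven triangles either lies
in the closed half-plane on the inner side of the edge or misses `x` (and so, being closed, a whole
neighbourhood of `x`). Points just outside the edge are therefore outside `P`, and `x` is in the
frontier; the endpoints follow by closedness of the frontier.
-/

open Filter Topology

lemma mem_nhdsWithin_of_notMem_of_isClosed {X : Type*} [TopologicalSpace X] {s t : Set X} {x : X}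
    (hs : IsClosed s) (hx : x ∉ s) : t ∈ 𝓝[s] x :=
  mem_nhdsWithin.2 ⟨sᶜ, hs.isOpen_compl, hx, by simp⟩

lemma smul_add_smul_add_smul_mem_convexHull {𝕜 E : Type*} [Field 𝕜] [LinearOrder 𝕜]
    [IsStrictOrderedRing 𝕜] [AddCommGroup E] [Module 𝕜 E] {α β γ : 𝕜} (hα : 0 ≤ α) (hβ : 0 ≤ β)
    (hγ : 0 ≤ γ) (h : α + β + γ = 1) (a b c : E) :
    α • a + β • b + γ • c ∈ convexHull 𝕜 {a, b, c} := by
  have := (convex_convexHull 𝕜 ({a, b, c} : Set E)).sum_mem (t := Finset.univ)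
    (w := ![α, β, γ]) (z := ![a, b, c]) (by simp [Fin.forall_fin_succ, *])
    (by simpa [Fin.sum_univ_three])
    (fun i _ => subset_convexHull 𝕜 _ (by fin_cases i <;> simp))
  simpa [Fin.sum_univ_three, add_assoc] using this

/-- Twice the signed area of the triangle `a b p`; positive iff `p` lies strictly to the left of
the line from `a` to `b`. -/
def cross (a b p : ℝ × ℝ) : ℝ := (b.1 - a.1) * (p.2 - a.2) - (b.2 - a.2) * (p.1 - a.1)

lemma cross_smul_add_smul (a b p q : ℝ × ℝ) {u s : ℝ} (h : u + s = 1) :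
    cross a b (u • p + s • q) = u * cross a b p + s * cross a b q := by
  obtain rfl : u = 1 - s := by linarith
  simp only [cross, Prod.fst_add, Prod.snd_add, Prod.smul_fst, Prod.smul_snd, smul_eq_mul]
  ring

lemma continuous_cross (a b : ℝ × ℝ) : Continuous (cross a b) := by
  unfold cross; fun_prop

@[simp] lemma cross_left (a b : ℝ × ℝ) : cross a b a = 0 := by unfold cross; ring

@[simp] lemma cross_right (a b : ℝ × ℝ) : cross a b b = 0 := by unfold cross; ring

lemma cross_rotate (a b c : ℝ × ℝ) : cross b c a = cross a b c := by unfold cross; ring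

lemma cross_add_cross_add_cross (a b c p : ℝ × ℝ) :
    cross b c p + cross c a p + cross a b p = cross a b c := by unfold cross; ring

lemma cross_smul_eq_cross_smul_add (a b c p : ℝ × ℝ) :
    cross a b c • p = cross b c p • a + cross c a p • b + cross a b p • c := by
  ext <;> simp only [Prod.fst_add, Prod.snd_add, Prod.smul_fst, Prod.smul_snd, smul_eq_mul] <;>
    unfold cross <;> ring

lemma sum_cross_div_smul_eq {a b c : ℝ × ℝ} (p : ℝ × ℝ) (h : cross a b c ≠ 0) :
    (cross b c p / cross a b c) • a + (cross c a p / cross a b c) • b +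
      (cross a b p / cross a b c) • c = p := by
  simp only [div_eq_inv_mul, mul_smul, ← smul_add, ← cross_smul_eq_cross_smul_add,
    inv_smul_smul₀ h]

lemma div_cross_nonneg {a b c : ℝ × ℝ} {q : ℝ} (h : 0 ≤ q * cross a b c) :
    0 ≤ q / cross a b c :=
  div_nonneg_iff.2 (mul_nonneg_iff.1 h)

lemma convex_setOf_mul_cross_nonneg (a b : ℝ × ℝ) (k : ℝ) :
    Convex ℝ {p | 0 ≤ cross a b p * k} := by
  intro p hp q hq u s hu hs hus
  simp only [mem_ofPred_eq, cross_smul_add_smul a b p q hus] at hp hq ⊢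
  nlinarith [mul_nonneg hu hp, mul_nonneg hs hq]

section Triangle

variable {a b c d p : ℝ × ℝ}

lemma convexHull_triple_subset (a b c : ℝ × ℝ) :
    convexHull ℝ {a, b, c} ⊆ {p | 0 ≤ cross a b p * cross a b c ∧
      0 ≤ cross b c p * cross a b c ∧ 0 ≤ cross c a p * cross a b c} := by
  refine convexHull_min ?_ ((convex_setOf_mul_cross_nonneg a b _).inter
    ((convex_setOf_mul_cross_nonneg b c _).inter (convex_setOf_mul_cross_nonneg c a _)))
  have h₁ := cross_rotate a b c
  have h₂ := cross_rotate b c a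
  rintro p (rfl | rfl | rfl) <;> simp [h₁, h₂, mul_self_nonneg]

lemma mem_convexHull_triple_iff (h : cross a b c ≠ 0) :
    p ∈ convexHull ℝ {a, b, c} ↔ 0 ≤ cross a b p * cross a b c ∧
      0 ≤ cross b c p * cross a b c ∧ 0 ≤ cross c a p * cross a b c := by
  refine ⟨fun hp => convexHull_triple_subset a b c hp, fun ⟨h₁, h₂, h₃⟩ => ?_⟩
  rw [← sum_cross_div_smul_eq p h]
  refine smul_add_smul_add_smul_mem_convexHull (div_cross_nonneg h₂) (div_cross_nonneg h₃)
    (div_cross_nonneg h₁) ?_ a b c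
  rw [← add_div, ← add_div, cross_add_cross_add_cross, div_self h]

lemma mem_segment_of_cross_eq_zero (h : cross a b c ≠ 0) (hp : p ∈ convexHull ℝ {a, b, c})
    (hab : cross a b p = 0) : p ∈ segment ℝ a b := by
  obtain ⟨-, h₂, h₃⟩ := (mem_convexHull_triple_iff h).1 hp
  refine ⟨_, _, div_cross_nonneg h₂, div_cross_nonneg h₃, ?_, ?_⟩
  · rw [← add_div, div_eq_one_iff_eq h]
    linarith [cross_add_cross_add_cross a b c p]
  · simpa [hab] using sum_cross_div_smul_eq p h

lemma setOf_cross_pos_subset_interior :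
    {p | 0 < cross a b p * cross a b c ∧ 0 < cross b c p * cross a b c ∧
      0 < cross c a p * cross a b c} ⊆ interior (convexHull ℝ {a, b, c}) := by
  refine interior_maximal (fun p hp => ?_) ?_
  · have h : cross a b c ≠ 0 := fun h => by simp [h] at hp
    exact (mem_convexHull_triple_iff h).2 ⟨hp.1.le, hp.2.1.le, hp.2.2.le⟩
  · have (x y : ℝ × ℝ) : IsOpen {p | 0 < cross x y p * cross a b c} :=
      isOpen_lt continuous_const ((continuous_cross x y).mul continuous_const)
    exact (this a b).inter ((this b c).inter (this c a))

lemma isClosed_convexHull_triple (a b c : ℝ × ℝ) : IsClosed (convexHull ℝ {a, b, c}) :=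
  ((toFinite _).isCompact_convexHull (𝕜 := ℝ)).isClosed

lemma convexHull_triple_rotate (a b c : ℝ × ℝ) :
    convexHull ℝ {b, c, a} = convexHull ℝ {a, b, c} := by
  rw [pair_comm, insert_comm]

lemma frontier_convexHull_triple_subset (h : cross a b c ≠ 0) :
    frontier (convexHull ℝ {a, b, c}) ⊆ segment ℝ a b ∪ segment ℝ b c ∪ segment ℝ c a := by
  rw [(isClosed_convexHull_triple a b c).frontier_eq]
  rintro p ⟨hp, hpi⟩
  obtain ⟨h₁, h₂, h₃⟩ := (mem_convexHull_triple_iff h).1 hp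
  have hb : cross b c a ≠ 0 := by rwa [cross_rotate]
  have hc : cross c a b ≠ 0 := by rwa [cross_rotate, cross_rotate]
  by_cases z₁ : cross a b p = 0
  · exact Or.inl (Or.inl (mem_segment_of_cross_eq_zero h hp z₁))
  by_cases z₂ : cross b c p = 0
  · rw [← convexHull_triple_rotate] at hp
    exact Or.inl (Or.inr (mem_segment_of_cross_eq_zero hb hp z₂))
  by_cases z₃ : cross c a p = 0
  · rw [← convexHull_triple_rotate, ← convexHull_triple_rotate] at hp
    exact Or.inr (mem_segment_of_cross_eq_zero hc hp z₃)
  exact absurd (setOf_cross_pos_subset_interior ⟨h₁.lt_of_ne (mul_ne_zero z₁ h).symm,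
    h₂.lt_of_ne (mul_ne_zero z₂ h).symm, h₃.lt_of_ne (mul_ne_zero z₃ h).symm⟩) hpi

lemma convexHull_triple_subset_of_sides {S : Set (ℝ × ℝ)} (h : cross a b c ≠ 0)
    (hab : segment ℝ a b ⊆ S) (hbc : segment ℝ b c ⊆ S) (hca : segment ℝ c a ⊆ S)
    (hint : interior (convexHull ℝ {a, b, c}) ⊆ S) : convexHull ℝ {a, b, c} ⊆ S := by
  intro p hp
  by_cases hpi : p ∈ interior (convexHull ℝ {a, b, c})
  · exact hint hpi
  have hpf : p ∈ frontier (convexHull ℝ {a, b, c}) := by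
    rw [(isClosed_convexHull_triple a b c).frontier_eq]; exact ⟨hp, hpi⟩
  rcases frontier_convexHull_triple_subset h hpf with (h₁ | h₂) | h₃
  exacts [hab h₁, hbc h₂, hca h₃]

lemma convexHull_triple_subset_setOf_cross_nonneg {q : ℝ × ℝ} (ha : 0 ≤ cross p q a)
    (hb : 0 ≤ cross p q b) (hc : 0 ≤ cross p q c) :
    convexHull ℝ {a, b, c} ⊆ {x | 0 ≤ cross p q x} := by
  refine convexHull_min ?_ (by simpa using convex_setOf_mul_cross_nonneg p q 1)
  simp [insert_subset_iff, *]

lemma openSegment_subset_interior {S : Set (ℝ × ℝ)} (hc : 0 < cross a b c) (hd : cross a b d < 0)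
    (hcS : convexHull ℝ {a, b, c} ⊆ S) (hdS : convexHull ℝ {a, b, d} ⊆ S) :
    openSegment ℝ a b ⊆ interior S := by
  rintro x ⟨u, s, hu, hs, hus, rfl⟩
  -- the open half-planes bounded by the four outer sides meet in a neighbourhood of the open
  -- diagonal, covered by the two triangles according to the side of `ab` a point lies on
  have hU : IsOpen {p | 0 < cross b c p ∧ 0 < cross c a p ∧ cross b d p < 0 ∧ cross d a p < 0} :=
    (isOpen_lt continuous_const (continuous_cross b c)).inter
      ((isOpen_lt continuous_const (continuous_cross c a)).inter
        ((isOpen_lt (continuous_cross b d) continuous_const).inter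
          (isOpen_lt (continuous_cross d a) continuous_const)))
  refine interior_maximal (fun p hp => ?_) hU ⟨?_, ?_, ?_, ?_⟩
  · obtain ⟨h₁, h₂, h₃, h₄⟩ := hp
    rcases le_total 0 (cross a b p) with hp | hp
    · exact hcS ((mem_convexHull_triple_iff hc.ne').2
        ⟨mul_nonneg hp hc.le, mul_nonneg h₁.le hc.le, mul_nonneg h₂.le hc.le⟩)
    · exact hdS ((mem_convexHull_triple_iff hd.ne).2 ⟨mul_nonneg_of_nonpos_of_nonpos hp hd.le,
        mul_nonneg_of_nonpos_of_nonpos h₃.le hd.le, mul_nonneg_of_nonpos_of_nonpos h₄.le hd.le⟩)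
  all_goals simp only [cross_smul_add_smul _ _ _ _ hus, cross_left, cross_right, mul_zero,
    zero_add, add_zero]
  · rw [cross_rotate]; exact mul_pos hu hc
  · rw [cross_rotate, cross_rotate]; exact mul_pos hs hc
  · rw [cross_rotate]; exact mul_neg_of_pos_of_neg hu hd
  · rw [cross_rotate, cross_rotate]; exact mul_neg_of_pos_of_neg hs hd

lemma notMem_interior_of_cross_nonneg_mem_nhdsWithin {S : Set (ℝ × ℝ)} {x : ℝ × ℝ} (hab : a ≠ b)
    (hx : cross a b x = 0) (hS : {p | 0 ≤ cross a b p} ∈ 𝓝[S] x) : x ∉ interior S := by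
  intro hxS
  rw [nhdsWithin_eq_nhds.2 (mem_interior_iff_mem_nhds.1 hxS)] at hS
  have hpos : 0 < (b.1 - a.1) ^ 2 + (b.2 - a.2) ^ 2 := by
    by_contra! h
    exact hab (Prod.ext (by nlinarith [sq_nonneg (b.1 - a.1), sq_nonneg (b.2 - a.2)])
      (by nlinarith [sq_nonneg (b.1 - a.1), sq_nonneg (b.2 - a.2)]))
  set n : ℝ × ℝ := (b.2 - a.2, a.1 - b.1)
  have hline : Tendsto (fun t : ℝ => x + t • n) (𝓝[>] 0) (𝓝 x) := by
    have : Continuous (fun t : ℝ => x + t • n) := by fun_prop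
    simpa using (this.tendsto 0).mono_left nhdsWithin_le_nhds
  obtain ⟨t, ht, ht'⟩ := ((hline.eventually hS).and self_mem_nhdsWithin).exists
  have : cross a b (x + t • n) = -t * ((b.1 - a.1) ^ 2 + (b.2 - a.2) ^ 2) := by
    simp only [cross, n, Prod.fst_add, Prod.snd_add, Prod.smul_fst, Prod.smul_snd,
      smul_eq_mul] at hx ⊢
    linear_combination hx
  simp only [this] at ht
  nlinarith [show (0 : ℝ) < t from ht']

lemma segment_subset_frontier {S : Set (ℝ × ℝ)} (hab : a ≠ b)
    (hS : segment ℝ a b ⊆ S) (hloc : ∀ x ∈ openSegment ℝ a b, {p | 0 ≤ cross a b p} ∈ 𝓝[S] x) :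
    segment ℝ a b ⊆ frontier S := by
  rw [← closure_openSegment]
  refine closure_minimal (fun x hx => ?_) isClosed_frontier
  have hx₀ : cross a b x = 0 := by
    obtain ⟨u, s, -, -, hus, rfl⟩ := hx
    simp [cross_smul_add_smul _ _ _ _ hus]
  exact ⟨subset_closure (hS (openSegment_subset_segment ℝ a b hx)),
    notMem_interior_of_cross_nonneg_mem_nhdsWithin hab hx₀ (hloc x hx)⟩

end Triangle

lemma isClosed_P : IsClosed P := by
  unfold P
  repeat' apply IsClosed.union
  all_goals exact isClosed_convexHull_triple _ _ _

lemma convexHull_subset_P {s : Set (ℝ × ℝ)}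
    (hs : s ⊆ {v 3, v 4, v 5} ∨ s ⊆ {v 3, v 5, v 8} ∨ s ⊆ {v 5, v 6, v 7} ∨ s ⊆ {v 5, v 7, v 8} ∨
      s ⊆ {v 3, v 8, v 0} ∨ s ⊆ {v 3, v 0, v 1} ∨ s ⊆ {v 3, v 1, v 2}) :
    convexHull ℝ s ⊆ P := by
  intro y hy
  simp only [P, mem_union]
  rcases hs with h | h | h | h | h | h | h <;> have := convexHull_mono h hy <;> tauto

lemma segment_subset_P (i : Fin 9) : segment ℝ (v i) (v (i + 1)) ⊆ P := by
  rw [← convexHull_pair]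
  fin_cases i <;> exact convexHull_subset_P (by simp [insert_subset_iff])

lemma halfplane_mem_nhdsWithin_P (i : Fin 9) :
    ∀ x ∈ openSegment ℝ (v i) (v (i + 1)), {p | 0 ≤ cross (v (i + 1)) (v i) p} ∈ 𝓝[P] x := by
  fin_cases i <;> simp only [Fin.reduceFinMk, Fin.reduceAdd, Fin.isValue]
  all_goals
    rintro x ⟨u, s, hu, hs, hus, rfl⟩
    simp only [P, nhdsWithin_union, Filter.mem_sup]
    refine ⟨⟨⟨⟨⟨⟨?_, ?_⟩, ?_⟩, ?_⟩, ?_⟩, ?_⟩, ?_⟩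
  -- each triangle lies on the inner side of the edge, or `linarith` separates it from `x`
  all_goals first
    | refine mem_of_superset self_mem_nhdsWithin
        (convexHull_triple_subset_setOf_cross_nonneg ?_ ?_ ?_) <;>
      simp only [v, Matrix.cons_val] <;> norm_num [cross] <;> done
    | refine mem_nhdsWithin_of_notMem_of_isClosed (isClosed_convexHull_triple _ _ _) fun hx => ?_
      obtain ⟨h₁, h₂, h₃⟩ := convexHull_triple_subset _ _ _ hx
      simp only [cross_smul_add_smul _ _ _ _ hus] at h₁ h₂ h₃
      simp only [v, Matrix.cons_val, cross] at h₁ h₂ h₃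
      linarith

lemma segment_subset_frontier_P (i : Fin 9) : segment ℝ (v i) (v (i + 1)) ⊆ frontier P := by
  rw [segment_symm]
  refine segment_subset_frontier ?_ (segment_symm ℝ (v i) _ ▸ segment_subset_P i)
    fun x hx => halfplane_mem_nhdsWithin_P i x (openSegment_symm ℝ _ (v i) ▸ hx)
  fin_cases i <;> simp [v]

lemma openSegment_diagonals_subset_interior_P :
    openSegment ℝ (v 3) (v 5) ⊆ interior P ∧ openSegment ℝ (v 3) (v 8) ⊆ interior P ∧
      openSegment ℝ (v 5) (v 8) ⊆ interior P ∧ openSegment ℝ (v 5) (v 7) ⊆ interior P ∧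
      openSegment ℝ (v 3) (v 0) ⊆ interior P ∧ openSegment ℝ (v 3) (v 1) ⊆ interior P := by
  refine ⟨openSegment_subset_interior (c := v 4) (d := v 8) ?_ ?_ ?_ ?_,
    openSegment_subset_interior (c := v 5) (d := v 0) ?_ ?_ ?_ ?_,
    openSegment_subset_interior (c := v 7) (d := v 3) ?_ ?_ ?_ ?_,
    openSegment_subset_interior (c := v 6) (d := v 8) ?_ ?_ ?_ ?_,
    openSegment_subset_interior (c := v 8) (d := v 1) ?_ ?_ ?_ ?_,
    openSegment_subset_interior (c := v 0) (d := v 2) ?_ ?_ ?_ ?_⟩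
  all_goals first
    | (simp only [v, Matrix.cons_val]; norm_num [cross]; done)
    | (apply convexHull_subset_P; simp [insert_subset_iff])

lemma P_subset_edges_union_interior :
    P ⊆ (⋃ i : Fin 9, segment ℝ (v i) (v (i + 1))) ∪ interior P := by
  set E := ⋃ i : Fin 9, segment ℝ (v i) (v (i + 1))
  have edge (i : Fin 9) : segment ℝ (v i) (v (i + 1)) ⊆ E ∪ interior P :=
    (subset_iUnion (fun i => segment ℝ (v i) (v (i + 1))) i).trans subset_union_left
  have diagonal {i j : Fin 9} (h : openSegment ℝ (v i) (v j) ⊆ interior P) :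
      segment ℝ (v i) (v j) ⊆ E ∪ interior P := by
    have vertex (k : Fin 9) : v k ∈ E ∪ interior P := edge k (left_mem_segment ℝ _ _)
    rw [← insert_endpoints_openSegment]
    exact insert_subset (vertex i) (insert_subset (vertex j) (h.trans subset_union_right))
  obtain ⟨d₃₅, d₃₈, d₅₈, d₅₇, d₃₀, d₃₁⟩ := openSegment_diagonals_subset_interior_P
  simp only [P, union_subset_iff]
  refine ⟨⟨⟨⟨⟨⟨?_, ?_⟩, ?_⟩, ?_⟩, ?_⟩, ?_⟩, ?_⟩ <;>
    refine convexHull_triple_subset_of_sides ?_ ?_ ?_ ?_ ?_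
  -- the triangles are listed clockwise, like the nonagon, so edges occur in their own orientation
  all_goals first
    | (simp only [v, Matrix.cons_val]; norm_num [cross]; done)
    | exact edge _
    | exact diagonal ‹_›
    | (rw [segment_symm]; exact diagonal ‹_›)
    | exact (interior_mono (convexHull_subset_P (by simp))).trans subset_union_right

lemma iUnion_segment_eq :
    ⋃ i : Fin 9, segment ℝ (v i) (v (i + 1)) =
      segment ℝ (v 0) (v 1) ∪ segment ℝ (v 1) (v 2) ∪ segment ℝ (v 2) (v 3) ∪
      segment ℝ (v 3) (v 4) ∪ segment ℝ (v 4) (v 5) ∪ segment ℝ (v 5) (v 6) ∪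
      segment ℝ (v 6) (v 7) ∪ segment ℝ (v 7) (v 8) ∪ segment ℝ (v 8) (v 0) := by
  ext x
  simp [Fin.exists_fin_succ]
  tauto

/-- The topological frontier of the nonagon `P` is the union of the nine closed
segments between cyclically consecutive vertices; in particular, `P` is a simple
polygon with these nine vertices. -/
theorem frontier_nonagon_eq_union_of_edges :
    frontier P =
      segment ℝ (v 0) (v 1) ∪ segment ℝ (v 1) (v 2) ∪ segment ℝ (v 2) (v 3) ∪
      segment ℝ (v 3) (v 4) ∪ segment ℝ (v 4) (v 5) ∪ segment ℝ (v 5) (v 6) ∪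
      segment ℝ (v 6) (v 7) ∪ segment ℝ (v 7) (v 8) ∪ segment ℝ (v 8) (v 0) := by
  rw [← iUnion_segment_eq]
  refine Subset.antisymm ?_ (iUnion_subset segment_subset_frontier_P)
  rw [isClosed_P.frontier_eq]
  rintro x ⟨hx, hxi⟩
  exact (P_subset_edges_union_interior hx).resolve_right hxi
end

section
/- The triangle T = conv{v3, v5, v8} of the nonagon P has all three of its edges in the interior of the polygon: the open segments (v3,v5), (v5,v8), and (v3,v8) (each segment with its endpoints removed) are contained in the topological interior of P. -/
open Set

lemma mem_tri_s6 {a b c x : ℝ × ℝ} (α β γ : ℝ) (hα : 0 ≤ α) (hβ : 0 ≤ β) (hγ : 0 ≤ γ)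
    (hs : α + β + γ = 1) (hx : α • a + β • b + γ • c = x) : x ∈ convexHull ℝ {a, b, c} := by
  have := (convex_convexHull ℝ ({a, b, c} : Set (ℝ × ℝ))).sum_mem
    (t := Finset.univ) (w := ![α, β, γ]) (z := ![a, b, c])
    (by intro i _; fin_cases i <;> simpa)
    (by simp [Fin.sum_univ_three, hs])
    (by intro i _; fin_cases i <;> simp only [Matrix.cons_val_zero, Matrix.cons_val_one,
        Matrix.head_cons, Matrix.cons_val_two, Matrix.tail_cons] <;>
        exact subset_convexHull ℝ _ (by simp))
  rw [Fin.sum_univ_three] at this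
  simpa [hx] using this

lemma hv0 : v 0 = ((0 : ℝ), (0 : ℝ)) := rfl
lemma hv3 : v 3 = ((2 : ℝ), (4 : ℝ)) := rfl
lemma hv4 : v 4 = ((6 : ℝ), (11 : ℝ)) := rfl
lemma hv5 : v 5 = ((4 : ℝ), (7 : ℝ)) := rfl
lemma hv7 : v 7 = ((9 : ℝ), (3 : ℝ)) := rfl
lemma hv8 : v 8 = ((6 : ℝ), (4 : ℝ)) := rfl

lemma memP1 {y : ℝ × ℝ} (h : y ∈ convexHull ℝ {v 3, v 4, v 5}) : y ∈ P := by
  simp only [P, Set.mem_union]; tauto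
lemma memP2 {y : ℝ × ℝ} (h : y ∈ convexHull ℝ {v 3, v 5, v 8}) : y ∈ P := by
  simp only [P, Set.mem_union]; tauto
lemma memP4 {y : ℝ × ℝ} (h : y ∈ convexHull ℝ {v 5, v 7, v 8}) : y ∈ P := by
  simp only [P, Set.mem_union]; tauto
lemma memP5 {y : ℝ × ℝ} (h : y ∈ convexHull ℝ {v 3, v 8, v 0}) : y ∈ P := by
  simp only [P, Set.mem_union]; tauto


lemma edge1 : segment ℝ ((2 : ℝ), (4 : ℝ)) ((4 : ℝ), (7 : ℝ)) \ {((2 : ℝ), (4 : ℝ)), ((4 : ℝ), (7 : ℝ))} ⊆ interior P := by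
  intro x hx
  obtain ⟨hseg, hne⟩ := hx
  simp only [Set.mem_insert_iff, Set.mem_singleton_iff] at hne
  push_neg at hne
  obtain ⟨u, t, hu, ht, hut, hx⟩ := hseg
  have h1 : x.1 = 2 * u + 4 * t := by
    have := congrArg Prod.fst hx; simp at this; linarith
  have h2 : x.2 = 4 * u + 7 * t := by
    have := congrArg Prod.snd hx; simp at this; linarith
  have ht0 : 0 < t := by
    rcases eq_or_lt_of_le ht with h | h
    · exfalso
      refine hne.1 (Prod.ext_iff.mpr ⟨?_, ?_⟩)
      · rw [h1]; show (2:ℝ) * u + 4 * t = 2; linarith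
      · rw [h2]; show (4:ℝ) * u + 7 * t = 4; linarith
    · exact h
  have hu0 : 0 < u := by
    rcases eq_or_lt_of_le hu with h | h
    · exfalso
      refine hne.2 (Prod.ext_iff.mpr ⟨?_, ?_⟩)
      · rw [h1]; show (2:ℝ) * u + 4 * t = 4; linarith
      · rw [h2]; show (4:ℝ) * u + 7 * t = 7; linarith
    · exact h
  have hUP : {y : ℝ × ℝ | (-2 : ℝ) < 7 * y.1 + -4 * y.2 ∧ (-2 : ℝ) < -4 * y.1 + 2 * y.2 ∧ (-26 : ℝ) < -3 * y.1 + -2 * y.2 ∧ (16 : ℝ) < 0 * y.1 + 4 * y.2} ⊆ P := by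
    rintro y ⟨hy1, hy2, hy3, hy4⟩
    rcases le_or_gt (2 : ℝ) (-3 * y.1 + 2 * y.2) with hside | hside
    · refine memP1 ?_
      rw [hv3, hv4, hv5]
      refine mem_tri_s6 (((-2 : ℝ)) * y.1 + (1 : ℝ) * y.2 + (1 : ℝ)) (((-3 : ℝ)/2) * y.1 + (1 : ℝ) * y.2 + ((-1 : ℝ))) (((7 : ℝ)/2) * y.1 + ((-2 : ℝ)) * y.2 + (1 : ℝ)) (by linarith) (by linarith) (by linarith)
        (by ring) ?_
      rw [Prod.ext_iff]
      constructor <;> simp <;> ring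
    · refine memP2 ?_
      rw [hv3, hv5, hv8]
      refine mem_tri_s6 (((-1 : ℝ)/4) * y.1 + ((-1 : ℝ)/6) * y.2 + ((13 : ℝ)/6)) ((0 : ℝ) * y.1 + ((1 : ℝ)/3) * y.2 + ((-4 : ℝ)/3)) (((1 : ℝ)/4) * y.1 + ((-1 : ℝ)/6) * y.2 + ((1 : ℝ)/6)) (by linarith) (by linarith) (by linarith)
        (by ring) ?_
      rw [Prod.ext_iff]
      constructor <;> simp <;> ring
  have hopen : IsOpen {y : ℝ × ℝ | (-2 : ℝ) < 7 * y.1 + -4 * y.2 ∧ (-2 : ℝ) < -4 * y.1 + 2 * y.2 ∧ (-26 : ℝ) < -3 * y.1 + -2 * y.2 ∧ (16 : ℝ) < 0 * y.1 + 4 * y.2} := by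
    have hset : {y : ℝ × ℝ | (-2 : ℝ) < 7 * y.1 + -4 * y.2 ∧ (-2 : ℝ) < -4 * y.1 + 2 * y.2 ∧ (-26 : ℝ) < -3 * y.1 + -2 * y.2 ∧ (16 : ℝ) < 0 * y.1 + 4 * y.2} = {y : ℝ × ℝ | (-2 : ℝ) < 7 * y.1 + -4 * y.2} ∩ {y : ℝ × ℝ | (-2 : ℝ) < -4 * y.1 + 2 * y.2} ∩ {y : ℝ × ℝ | (-26 : ℝ) < -3 * y.1 + -2 * y.2} ∩ {y : ℝ × ℝ | (16 : ℝ) < 0 * y.1 + 4 * y.2} := by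
      ext y; simp only [Set.mem_inter_iff, Set.mem_setOf_eq]; tauto
    rw [hset]
    exact (((isOpen_lt continuous_const (by fun_prop)).inter
      (isOpen_lt continuous_const (by fun_prop))).inter
      (isOpen_lt continuous_const (by fun_prop))).inter
      (isOpen_lt continuous_const (by fun_prop))
  exact interior_maximal hUP hopen ⟨by nlinarith, by nlinarith, by nlinarith, by nlinarith⟩


lemma edge2 : segment ℝ ((4 : ℝ), (7 : ℝ)) ((6 : ℝ), (4 : ℝ)) \ {((4 : ℝ), (7 : ℝ)), ((6 : ℝ), (4 : ℝ))} ⊆ interior P := by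
  intro x hx
  obtain ⟨hseg, hne⟩ := hx
  simp only [Set.mem_insert_iff, Set.mem_singleton_iff] at hne
  push_neg at hne
  obtain ⟨u, t, hu, ht, hut, hx⟩ := hseg
  have h1 : x.1 = 4 * u + 6 * t := by
    have := congrArg Prod.fst hx; simp at this; linarith
  have h2 : x.2 = 7 * u + 4 * t := by
    have := congrArg Prod.snd hx; simp at this; linarith
  have ht0 : 0 < t := by
    rcases eq_or_lt_of_le ht with h | h
    · exfalso
      refine hne.1 (Prod.ext_iff.mpr ⟨?_, ?_⟩)
      · rw [h1]; show (4:ℝ) * u + 6 * t = 4; linarith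
      · rw [h2]; show (7:ℝ) * u + 4 * t = 7; linarith
    · exact h
  have hu0 : 0 < u := by
    rcases eq_or_lt_of_le hu with h | h
    · exfalso
      refine hne.2 (Prod.ext_iff.mpr ⟨?_, ?_⟩)
      · rw [h1]; show (4:ℝ) * u + 6 * t = 6; linarith
      · rw [h2]; show (7:ℝ) * u + 4 * t = 4; linarith
    · exact h
  have hUP : {y : ℝ × ℝ | (-2 : ℝ) < 3 * y.1 + -2 * y.2 ∧ (16 : ℝ) < 0 * y.1 + 4 * y.2 ∧ (18 : ℝ) < 1 * y.1 + 3 * y.2 ∧ (-51 : ℝ) < -4 * y.1 + -5 * y.2} ⊆ P := by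
    rintro y ⟨hy1, hy2, hy3, hy4⟩
    rcases le_or_gt (-26 : ℝ) (-3 * y.1 + -2 * y.2) with hside | hside
    · refine memP2 ?_
      rw [hv3, hv5, hv8]
      refine mem_tri_s6 (((-1 : ℝ)/4) * y.1 + ((-1 : ℝ)/6) * y.2 + ((13 : ℝ)/6)) ((0 : ℝ) * y.1 + ((1 : ℝ)/3) * y.2 + ((-4 : ℝ)/3)) (((1 : ℝ)/4) * y.1 + ((-1 : ℝ)/6) * y.2 + ((1 : ℝ)/6)) (by linarith) (by linarith) (by linarith)
        (by ring) ?_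
      rw [Prod.ext_iff]
      constructor <;> simp <;> ring
    · refine memP4 ?_
      rw [hv5, hv7, hv8]
      refine mem_tri_s6 (((1 : ℝ)/7) * y.1 + ((3 : ℝ)/7) * y.2 + ((-18 : ℝ)/7)) (((3 : ℝ)/7) * y.1 + ((2 : ℝ)/7) * y.2 + ((-26 : ℝ)/7)) (((-4 : ℝ)/7) * y.1 + ((-5 : ℝ)/7) * y.2 + ((51 : ℝ)/7)) (by linarith) (by linarith) (by linarith)
        (by ring) ?_
      rw [Prod.ext_iff]
      constructor <;> simp <;> ring
  have hopen : IsOpen {y : ℝ × ℝ | (-2 : ℝ) < 3 * y.1 + -2 * y.2 ∧ (16 : ℝ) < 0 * y.1 + 4 * y.2 ∧ (18 : ℝ) < 1 * y.1 + 3 * y.2 ∧ (-51 : ℝ) < -4 * y.1 + -5 * y.2} := by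
    have hset : {y : ℝ × ℝ | (-2 : ℝ) < 3 * y.1 + -2 * y.2 ∧ (16 : ℝ) < 0 * y.1 + 4 * y.2 ∧ (18 : ℝ) < 1 * y.1 + 3 * y.2 ∧ (-51 : ℝ) < -4 * y.1 + -5 * y.2} = {y : ℝ × ℝ | (-2 : ℝ) < 3 * y.1 + -2 * y.2} ∩ {y : ℝ × ℝ | (16 : ℝ) < 0 * y.1 + 4 * y.2} ∩ {y : ℝ × ℝ | (18 : ℝ) < 1 * y.1 + 3 * y.2} ∩ {y : ℝ × ℝ | (-51 : ℝ) < -4 * y.1 + -5 * y.2} := by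
      ext y; simp only [Set.mem_inter_iff, Set.mem_setOf_eq]; tauto
    rw [hset]
    exact (((isOpen_lt continuous_const (by fun_prop)).inter
      (isOpen_lt continuous_const (by fun_prop))).inter
      (isOpen_lt continuous_const (by fun_prop))).inter
      (isOpen_lt continuous_const (by fun_prop))
  exact interior_maximal hUP hopen ⟨by nlinarith, by nlinarith, by nlinarith, by nlinarith⟩


lemma edge3 : segment ℝ ((2 : ℝ), (4 : ℝ)) ((6 : ℝ), (4 : ℝ)) \ {((2 : ℝ), (4 : ℝ)), ((6 : ℝ), (4 : ℝ))} ⊆ interior P := by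
  intro x hx
  obtain ⟨hseg, hne⟩ := hx
  simp only [Set.mem_insert_iff, Set.mem_singleton_iff] at hne
  push_neg at hne
  obtain ⟨u, t, hu, ht, hut, hx⟩ := hseg
  have h1 : x.1 = 2 * u + 6 * t := by
    have := congrArg Prod.fst hx; simp at this; linarith
  have h2 : x.2 = 4 * u + 4 * t := by
    have := congrArg Prod.snd hx; simp at this; linarith
  have ht0 : 0 < t := by
    rcases eq_or_lt_of_le ht with h | h
    · exfalso
      refine hne.1 (Prod.ext_iff.mpr ⟨?_, ?_⟩)
      · rw [h1]; show (2:ℝ) * u + 6 * t = 2; linarith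
      · rw [h2]; show (4:ℝ) * u + 4 * t = 4; linarith
    · exact h
  have hu0 : 0 < u := by
    rcases eq_or_lt_of_le hu with h | h
    · exfalso
      refine hne.2 (Prod.ext_iff.mpr ⟨?_, ?_⟩)
      · rw [h1]; show (2:ℝ) * u + 6 * t = 6; linarith
      · rw [h2]; show (4:ℝ) * u + 4 * t = 4; linarith
    · exact h
  have hUP : {y : ℝ × ℝ | (-2 : ℝ) < 3 * y.1 + -2 * y.2 ∧ (-26 : ℝ) < -3 * y.1 + -2 * y.2 ∧ (0 : ℝ) < -4 * y.1 + 6 * y.2 ∧ (0 : ℝ) < 4 * y.1 + -2 * y.2} ⊆ P := by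
    rintro y ⟨hy1, hy2, hy3, hy4⟩
    rcases le_or_gt (16 : ℝ) (0 * y.1 + 4 * y.2) with hside | hside
    · refine memP2 ?_
      rw [hv3, hv5, hv8]
      refine mem_tri_s6 (((-1 : ℝ)/4) * y.1 + ((-1 : ℝ)/6) * y.2 + ((13 : ℝ)/6)) ((0 : ℝ) * y.1 + ((1 : ℝ)/3) * y.2 + ((-4 : ℝ)/3)) (((1 : ℝ)/4) * y.1 + ((-1 : ℝ)/6) * y.2 + ((1 : ℝ)/6)) (by linarith) (by linarith) (by linarith)
        (by ring) ?_
      rw [Prod.ext_iff]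
      constructor <;> simp <;> ring
    · refine memP5 ?_
      rw [hv3, hv8, hv0]
      refine mem_tri_s6 (((-1 : ℝ)/4) * y.1 + ((3 : ℝ)/8) * y.2 + (0 : ℝ)) (((1 : ℝ)/4) * y.1 + ((-1 : ℝ)/8) * y.2 + (0 : ℝ)) ((0 : ℝ) * y.1 + ((-1 : ℝ)/4) * y.2 + (1 : ℝ)) (by linarith) (by linarith) (by linarith)
        (by ring) ?_
      rw [Prod.ext_iff]
      constructor <;> simp <;> ring
  have hopen : IsOpen {y : ℝ × ℝ | (-2 : ℝ) < 3 * y.1 + -2 * y.2 ∧ (-26 : ℝ) < -3 * y.1 + -2 * y.2 ∧ (0 : ℝ) < -4 * y.1 + 6 * y.2 ∧ (0 : ℝ) < 4 * y.1 + -2 * y.2} := by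
    have hset : {y : ℝ × ℝ | (-2 : ℝ) < 3 * y.1 + -2 * y.2 ∧ (-26 : ℝ) < -3 * y.1 + -2 * y.2 ∧ (0 : ℝ) < -4 * y.1 + 6 * y.2 ∧ (0 : ℝ) < 4 * y.1 + -2 * y.2} = {y : ℝ × ℝ | (-2 : ℝ) < 3 * y.1 + -2 * y.2} ∩ {y : ℝ × ℝ | (-26 : ℝ) < -3 * y.1 + -2 * y.2} ∩ {y : ℝ × ℝ | (0 : ℝ) < -4 * y.1 + 6 * y.2} ∩ {y : ℝ × ℝ | (0 : ℝ) < 4 * y.1 + -2 * y.2} := by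
      ext y; simp only [Set.mem_inter_iff, Set.mem_setOf_eq]; tauto
    rw [hset]
    exact (((isOpen_lt continuous_const (by fun_prop)).inter
      (isOpen_lt continuous_const (by fun_prop))).inter
      (isOpen_lt continuous_const (by fun_prop))).inter
      (isOpen_lt continuous_const (by fun_prop))
  exact interior_maximal hUP hopen ⟨by nlinarith, by nlinarith, by nlinarith, by nlinarith⟩


/-- The triangle `conv {v 3, v 5, v 8}` has all three of its edges in the interior
of the nonagon: each closed segment with its endpoints removed (i.e. the open
segment) between two of its vertices is contained in the topological interior
of `P`. -/
theorem triangle_edges_in_interior :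
    segment ℝ (v 3) (v 5) \ {v 3, v 5} ⊆ interior P ∧
    segment ℝ (v 5) (v 8) \ {v 5, v 8} ⊆ interior P ∧
    segment ℝ (v 3) (v 8) \ {v 3, v 8} ⊆ interior P := by
  rw [hv3, hv5, hv8]
  exact ⟨edge1, edge2, edge3⟩
end

section
/- Guards placed at the three vertices v3, v5, v8 cover the nonagon P: for every point q ∈ P, at least one of the closed segments [v3, q], [v5, q], [v8, q] is contained in P. (Thus P can be guarded by ⌊9/3⌋ = 3 vertex guards, even though no every-third-vertex placement of guards covers P.) -/
open Set

/-- Guards placed at the three vertices `v 3`, `v 5`, `v 8` cover the nonagon `P`: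
every point of `P` is visible from at least one of them. -/
theorem nonagon_covered_by_v3_v5_v8 :
    ∀ q ∈ P, segment ℝ (v 3) q ⊆ P ∨ segment ℝ (v 5) q ⊆ P ∨
      segment ℝ (v 8) q ⊆ P := by
  intro q hq
  rcases hq with ((((((h | h) | h) | h) | h) | h) | h)
  · exact Or.inl (((convex_convexHull ℝ _).segment_subset
      (subset_convexHull ℝ _ (by simp)) h).trans
      (fun x hx => by unfold P; simp only [mem_union]; tauto))
  · exact Or.inl (((convex_convexHull ℝ _).segment_subset
      (subset_convexHull ℝ _ (by simp)) h).trans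
      (fun x hx => by unfold P; simp only [mem_union]; tauto))
  · exact Or.inr (Or.inl (((convex_convexHull ℝ _).segment_subset
      (subset_convexHull ℝ _ (by simp)) h).trans
      (fun x hx => by unfold P; simp only [mem_union]; tauto)))
  · exact Or.inr (Or.inl (((convex_convexHull ℝ _).segment_subset
      (subset_convexHull ℝ _ (by simp)) h).trans
      (fun x hx => by unfold P; simp only [mem_union]; tauto)))
  · exact Or.inl (((convex_convexHull ℝ _).segment_subset
      (subset_convexHull ℝ _ (by simp)) h).trans
      (fun x hx => by unfold P; simp only [mem_union]; tauto))
  · exact Or.inl (((convex_convexHull ℝ _).segment_subset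
      (subset_convexHull ℝ _ (by simp)) h).trans
      (fun x hx => by unfold P; simp only [mem_union]; tauto))
  · exact Or.inl (((convex_convexHull ℝ _).segment_subset
      (subset_convexHull ℝ _ (by simp)) h).trans
      (fun x hx => by unfold P; simp only [mem_union]; tauto))
end
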